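/- If shape posets S₁ and S₂ are disjoint and S₁ + S₂ denotes their disjoint sum (no comparabilities between the parts), then for any family of games indexed by S₁ + S₂, the ordered join (S₁ + S₂) ⋈ G equals the disjunctive sum (S₁ ⋈ G|_{S₁}) + (S₂ ⋈ G|_{S₂}) as games. -/

import Mathlib

/-! A move at `inl i` in the ordered join over `S₁ ⊕ S₂` zeroes only components strictly above
`inl i`, all of which lie in `S₁`: it is a move of the join over `S₁` that leaves the `S₂`-part
untouched, and symmetrically for `inr`. So the options of both sides correspond along
`(Σ s : S₁ ⊕ S₂, _) ≃ (Σ i : S₁, _) ⊕ (Σ i : S₂, _)`, and induction on the (well-founded) move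
relation makes the two games identical. -/

universe u v

namespace SetTheory

inductive PGame : Type (u + 1)
  | mk : ∀ α β : Type u, (α → PGame) → (β → PGame) → PGame

namespace PGame

def LeftMoves : PGame → Type u
  | mk l _ _ _ => l

def RightMoves : PGame → Type u
  | mk _ r _ _ => r

def moveLeft : ∀ g : PGame, LeftMoves g → PGame
  | mk _l _ L _ => L

def moveRight : ∀ g : PGame, RightMoves g → PGame
  | mk _ _r _ R => R

instance : Zero PGame :=
  ⟨⟨PEmpty, PEmpty, PEmpty.elim, PEmpty.elim⟩⟩

noncomputable instance : Add PGame.{u} :=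
  ⟨fun x y => by
    induction x generalizing y with | mk xl xr _ _ IHxl IHxr => _
    induction y with | mk yl yr yL yR IHyl IHyr => _
    have y := mk yl yr yL yR
    refine ⟨xl ⊕ yl, xr ⊕ yr, Sum.rec ?_ ?_, Sum.rec ?_ ?_⟩
    · exact fun i => IHxl i y
    · exact IHyl
    · exact fun i => IHxr i y
    · exact IHyr⟩

def Identical : PGame.{u} → PGame.{v} → Prop
  | mk _ _ xL xR, mk _ _ yL yR =>
    Relator.BiTotal (fun i j ↦ Identical (xL i) (yL j)) ∧
      Relator.BiTotal (fun i j ↦ Identical (xR i) (yR j))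

infix:50 " ≡ " => PGame.Identical

end PGame

end SetTheory

def Nimber : Type (u + 1) := Ordinal.{u}

namespace Nimber

noncomputable instance : ConditionallyCompleteLinearOrderBot Nimber.{u} :=
  inferInstanceAs (ConditionallyCompleteLinearOrderBot Ordinal.{u})

end Nimber

namespace SetTheory

namespace PGame

noncomputable def grundyValue : PGame.{u} → Nimber.{u}
  | mk _ _ L _ => sInf (Set.range fun i => grundyValue (L i))ᶜ

end PGame

end SetTheory

open SetTheory PGame Nimber

noncomputable section
open Classical in
/-- The state resulting from a (Left) move in component `i₀` of an ordered join:
all components strictly above `i₀` are replaced by the empty game `0`. -/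
def ojNextL {S : Type} [PartialOrder S] (x : S → PGame) (i₀ : S) (j : (x i₀).LeftMoves) :
    S → PGame :=
  fun i => if i = i₀ then (x i₀).moveLeft j else if i₀ < i then 0 else x i

open Classical in
def ojNextR {S : Type} [PartialOrder S] (x : S → PGame) (i₀ : S) (j : (x i₀).RightMoves) :
    S → PGame :=
  fun i => if i = i₀ then (x i₀).moveRight j else if i₀ < i then 0 else x i

/-- The move relation of the ordered join: `OJRel y x` iff `y` results from `x` by a single move. -/
def OJRel {S : Type} [PartialOrder S] (y x : S → PGame) : Prop :=
  (∃ i₀ j, y = ojNextL x i₀ j) ∨ (∃ i₀ j, y = ojNextR x i₀ j)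

theorem ojrel_L {S : Type} [PartialOrder S] (x : S → PGame) (i₀ : S) (j : (x i₀).LeftMoves) :
    OJRel (ojNextL x i₀ j) x := Or.inl ⟨i₀, j, rfl⟩

theorem ojrel_R {S : Type} [PartialOrder S] (x : S → PGame) (i₀ : S) (j : (x i₀).RightMoves) :
    OJRel (ojNextR x i₀ j) x := Or.inr ⟨i₀, j, rfl⟩

/-- The ordered join of a family of games, as a game, given a termination certificate. -/
def ojoinAcc {S : Type} [PartialOrder S] : ∀ x : S → PGame, Acc OJRel x → PGame := fun x h =>
  Acc.rec (motive := fun x _ => PGame)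
    (fun x _ ih =>
      PGame.mk (Σ i₀ : S, (x i₀).LeftMoves) (Σ i₀ : S, (x i₀).RightMoves)
        (fun p => ih _ (ojrel_L x p.1 p.2))
        (fun p => ih _ (ojrel_R x p.1 p.2))) h

open Classical in
/-- The ordered join `S ⋈ G` of a family of games `G` over the poset `S`.
(Defined as `0` in the degenerate non-terminating case.) -/
def ojoin {S : Type} [PartialOrder S] (x : S → PGame) : PGame :=
  if h : Acc OJRel x then ojoinAcc x h else 0

/-- The Grundy set `Γ₁(G)`: the set of Grundy numbers of the options of `G`. -/
def grundySet (G : PGame) : Set Nimber :=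
  Set.range fun i => grundyValue (G.moveLeft i)
end

theorem identical_mk_of_equiv {xl xr : Type u} {yl yr : Type v} {xL : xl → PGame.{u}}
    {xR : xr → PGame.{u}} {yL : yl → PGame.{v}} {yR : yr → PGame.{v}}
    (eL : xl ≃ yl) (eR : xr ≃ yr) (hL : ∀ i, xL i ≡ yL (eL i)) (hR : ∀ i, xR i ≡ yR (eR i)) :
    PGame.mk xl xr xL xR ≡ PGame.mk yl yr yL yR :=
  ⟨⟨fun i => ⟨eL i, hL i⟩, fun j => ⟨eL.symm j, by simpa using hL (eL.symm j)⟩⟩,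
    ⟨fun i => ⟨eR i, hR i⟩, fun j => ⟨eR.symm j, by simpa using hR (eR.symm j)⟩⟩⟩

theorem ojoin_eq_mk {S : Type} [PartialOrder S] (x : S → PGame) (h : Acc OJRel x) :
    ojoin x = PGame.mk (Σ i₀ : S, (x i₀).LeftMoves) (Σ i₀ : S, (x i₀).RightMoves)
      (fun p => ojoin (ojNextL x p.1 p.2)) (fun p => ojoin (ojNextR x p.1 p.2)) := by
  rw [ojoin, dif_pos h]
  obtain ⟨x, hx⟩ := h
  exact congrArg₂ (PGame.mk _ _) (funext fun p => (dif_pos (hx _ (ojrel_L x p.1 p.2))).symm)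
    (funext fun p => (dif_pos (hx _ (ojrel_R x p.1 p.2))).symm)

section SumElim

variable {S₁ S₂ : Type} [PartialOrder S₁] [PartialOrder S₂] (x : S₁ → PGame) (y : S₂ → PGame)

theorem ojNextL_sumElim_inl (i : S₁) (j : (x i).LeftMoves) :
    ojNextL (Sum.elim x y) (.inl i) j = Sum.elim (ojNextL x i j) y := by
  funext s
  cases s <;> simp only [ojNextL, Sum.elim_inl, Sum.elim_inr] <;> split_ifs <;>
    simp_all [Sum.inl_lt_inl_iff]

theorem ojNextR_sumElim_inl (i : S₁) (j : (x i).RightMoves) :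
    ojNextR (Sum.elim x y) (.inl i) j = Sum.elim (ojNextR x i j) y := by
  funext s
  cases s <;> simp only [ojNextR, Sum.elim_inl, Sum.elim_inr] <;> split_ifs <;>
    simp_all [Sum.inl_lt_inl_iff]

theorem ojNextL_sumElim_inr (i : S₂) (j : (y i).LeftMoves) :
    ojNextL (Sum.elim x y) (.inr i) j = Sum.elim x (ojNextL y i j) := by
  funext s
  cases s <;> simp only [ojNextL, Sum.elim_inl, Sum.elim_inr] <;> split_ifs <;>
    simp_all [Sum.inr_lt_inr_iff]

theorem ojNextR_sumElim_inr (i : S₂) (j : (y i).RightMoves) :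
    ojNextR (Sum.elim x y) (.inr i) j = Sum.elim x (ojNextR y i j) := by
  funext s
  cases s <;> simp only [ojNextR, Sum.elim_inl, Sum.elim_inr] <;> split_ifs <;>
    simp_all [Sum.inr_lt_inr_iff]

variable {x y}

theorem OJRel.sumElim_left {x' : S₁ → PGame} (hr : OJRel x' x) :
    OJRel (Sum.elim x' y) (Sum.elim x y) := by
  rcases hr with ⟨i, j, rfl⟩ | ⟨i, j, rfl⟩
  · rw [← ojNextL_sumElim_inl]; exact ojrel_L _ _ _
  · rw [← ojNextR_sumElim_inl]; exact ojrel_R _ _ _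

theorem OJRel.sumElim_right {y' : S₂ → PGame} (hr : OJRel y' y) :
    OJRel (Sum.elim x y') (Sum.elim x y) := by
  rcases hr with ⟨i, j, rfl⟩ | ⟨i, j, rfl⟩
  · rw [← ojNextL_sumElim_inr]; exact ojrel_L _ _ _
  · rw [← ojNextR_sumElim_inr]; exact ojrel_R _ _ _

theorem acc_of_acc_sumElim_left (h : Acc OJRel (Sum.elim x y)) : Acc OJRel x :=
  Subrelation.accessible (fun hr => hr.sumElim_left) (InvImage.accessible (Sum.elim · y) h)

theorem acc_of_acc_sumElim_right (h : Acc OJRel (Sum.elim x y)) : Acc OJRel y :=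
  Subrelation.accessible (fun hr => hr.sumElim_right) (InvImage.accessible (Sum.elim x ·) h)

theorem ojoin_sumElim_identical (h : Acc OJRel (Sum.elim x y)) :
    ojoin (Sum.elim x y) ≡ ojoin x + ojoin y := by
  generalize hz : Sum.elim x y = z at h
  induction h generalizing x y with
  | intro z hz' ih =>
    subst hz
    have h : Acc OJRel (Sum.elim x y) := ⟨_, hz'⟩
    have left : ∀ x', OJRel x' x → ojoin (Sum.elim x' y) ≡ ojoin x' + ojoin y :=
      fun x' hr => ih _ hr.sumElim_left rfl
    have right : ∀ y', OJRel y' y → ojoin (Sum.elim x y') ≡ ojoin x + ojoin y' :=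
      fun y' hr => ih _ hr.sumElim_right rfl
    -- the options of `mk … + mk …` mention the unfolded summands, so unfold them in `left`, `right`
    rw [ojoin_eq_mk x (acc_of_acc_sumElim_left h)] at right ⊢
    rw [ojoin_eq_mk y (acc_of_acc_sumElim_right h)] at left ⊢
    rw [ojoin_eq_mk _ h]
    refine identical_mk_of_equiv (Equiv.sumSigmaDistrib _) (Equiv.sumSigmaDistrib _) ?_ ?_
    · rintro ⟨i | i, j⟩
      · rw [ojNextL_sumElim_inl x y i j]; exact left _ (ojrel_L x i j)
      · rw [ojNextL_sumElim_inr x y i j]; exact right _ (ojrel_L y i j)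
    · rintro ⟨i | i, j⟩
      · rw [ojNextR_sumElim_inl x y i j]; exact left _ (ojrel_R x i j)
      · rw [ojNextR_sumElim_inr x y i j]; exact right _ (ojrel_R y i j)

end SumElim

open scoped PGame in
/-- for the disjoint sum `S₁ + S₂` of two shapes (with no comparabilities
between the parts), the ordered join `(S₁ + S₂) ⋈ G` is (identical, as a game, to) the
disjunctive sum `(S₁ ⋈ G|_{S₁}) + (S₂ ⋈ G|_{S₂})`. -/
theorem ojoin_disjoint_sum {S₁ S₂ : Type} [PartialOrder S₁] [PartialOrder S₂]
    (G : S₁ ⊕ S₂ → PGame) (h : Acc OJRel G) :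
    ojoin G ≡ ojoin (fun i : S₁ => G (Sum.inl i)) + ojoin (fun i : S₂ => G (Sum.inr i)) := by
  rw [← Sum.elim_comp_inl_inr G] at h ⊢
  exact ojoin_sumElim_identical h
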